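/- arXiv:0804.1415 — 3 statements merged into one kernel-verified Lean document; each statement's English description precedes it below -/
import Mathlib

section
/- For every h > 0 one has Γ(h; φ) < D_∞; moreover lim_{h→∞} Γ(h; φ) = D_∞ and lim_{h→∞} h · Γ′(h; φ) = 0, where Γ′(h; φ) = ∫_{ℝ^d} |φ(x)|² G′(h |φ(x)|²) dx. -/
open MeasureTheory ProbabilityTheory Real Filter Topology

open Function Set

/-! Write `p = P(ξ = 0)`. Splitting `E[e^{-uξ}]` over `{ξ = 0}` and its complement gives
`E[e^{-uξ}] > p`, and dominated convergence gives `E[e^{-uξ}] → p`; hence `G` takes values in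
`[0, ν)` on `[0, ∞)` and tends to `ν = -log p`. Similarly `u G'(u) = E[uξ e^{-uξ}] / E[e^{-uξ}]`
is bounded by `e⁻¹ / p` (as `x e^{-x} ≤ e⁻¹`) and tends to `0`. Since `G(0) = 0`, both `Γ(h)` and
`h Γ'(h)` are integrals over the set `{φ ≠ 0}` of finite measure of bounded functions of
`h |φ|²`, so dominated convergence on that set gives the two limits, and `G < ν` gives
`Γ(h) < D_∞`. -/

lemma abs_mul_exp_neg_le {x : ℝ} (hx : 0 ≤ x) : |x * exp (-x)| ≤ exp (-1) := by
  rw [abs_of_nonneg (by positivity)]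
  exact mul_exp_neg_le_exp_neg_one x

section IntegralCompMul

variable {X : Type*} [MeasurableSpace X] {m : Measure X} {f : X → ℝ} {F : ℝ → ℝ} {C c h : ℝ}

lemma ae_norm_comp_mul_le (hf0 : 0 ≤ᵐ[m] f) (hFC : ∀ u, 0 ≤ u → |F u| ≤ C) (hh : 0 ≤ h) :
    ∀ᵐ x ∂m, ‖F (h * f x)‖ ≤ C := by
  filter_upwards [hf0] with x hx using hFC _ (mul_nonneg hh hx)

lemma integrable_comp_mul [IsFiniteMeasure m] (hf : Measurable f) (hf0 : 0 ≤ᵐ[m] f)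
    (hF : Measurable F) (hFC : ∀ u, 0 ≤ u → |F u| ≤ C) (hh : 0 ≤ h) :
    Integrable (fun x => F (h * f x)) m :=
  .of_bound (hF.comp (hf.const_mul h)).aestronglyMeasurable C (ae_norm_comp_mul_le hf0 hFC hh)

theorem tendsto_integral_comp_mul_atTop [IsFiniteMeasure m] (hf : Measurable f)
    (hf0 : 0 ≤ᵐ[m] f) (hF : Measurable F) (hFC : ∀ u, 0 ≤ u → |F u| ≤ C)
    (hFc : Tendsto F atTop (𝓝 c)) :
    Tendsto (fun h => ∫ x, F (h * f x) ∂m) atTop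
      (𝓝 (F 0 * m.real {x | f x = 0} + c * m.real (support f))) := by
  have hzero : MeasurableSet {x | f x = 0} := hf (measurableSet_singleton 0)
  have hsupp : MeasurableSet (support f) := hzero.compl
  have hlim : ∀ᵐ x ∂m, Tendsto (fun h => F (h * f x)) atTop
      (𝓝 ({x | f x = 0}.indicator (fun _ => F 0) x + (support f).indicator (fun _ => c) x)) := by
    filter_upwards [hf0] with x hx
    rcases hx.eq_or_lt with hx | hx
    · simp [← hx]
    · have hx0 : x ∉ {x | f x = 0} := hx.ne'
      rw [indicator_of_notMem hx0, indicator_of_mem (mem_support.2 hx.ne'), zero_add]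
      exact hFc.comp (tendsto_id.atTop_mul_const hx)
  have := tendsto_integral_filter_of_dominated_convergence (F := fun h x => F (h * f x))
    (fun _ => C) (.of_forall fun h => (hF.comp (hf.const_mul h)).aestronglyMeasurable)
    ((eventually_ge_atTop 0).mono fun h hh => ae_norm_comp_mul_le hf0 hFC hh)
    (integrable_const C) hlim
  rwa [integral_add ((integrable_const _).indicator hzero) ((integrable_const _).indicator hsupp),
    integral_indicator_const _ hzero, integral_indicator_const _ hsupp, smul_eq_mul, smul_eq_mul,
    mul_comm _ (F 0), mul_comm _ c] at this

theorem tendsto_integral_comp_mul_atTop_of_measure_support_lt_top (hf : Measurable f)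
    (hf0 : 0 ≤ f) (hS : m (support f) < ⊤) (hF : Measurable F) (hF0 : F 0 = 0)
    (hFC : ∀ u, 0 ≤ u → |F u| ≤ C) (hFc : Tendsto F atTop (𝓝 c)) :
    Tendsto (fun h => ∫ x, F (h * f x) ∂m) atTop (𝓝 (c * m.real (support f))) := by
  have : IsFiniteMeasure (m.restrict (support f)) := isFiniteMeasure_restrict.2 hS.ne
  have key := tendsto_integral_comp_mul_atTop (m := m.restrict (support f)) hf (.of_forall hf0)
    hF hFC hFc
  rw [hF0, zero_mul, zero_add, measureReal_restrict_apply_self] at key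
  refine key.congr fun h => setIntegral_eq_integral_of_forall_compl_eq_zero fun x hx => ?_
  rw [notMem_support.1 hx, mul_zero, hF0]

theorem integral_comp_mul_lt_mul_measureReal_support (hf : Measurable f) (hf0 : 0 ≤ f)
    (hS : m (support f) < ⊤) (hS0 : m (support f) ≠ 0) (hF : Measurable F) (hF0 : F 0 = 0)
    (hFC : ∀ u, 0 ≤ u → |F u| ≤ C) (hFlt : ∀ u, 0 ≤ u → F u < c) (hh : 0 ≤ h) :
    ∫ x, F (h * f x) ∂m < c * m.real (support f) := by
  have : IsFiniteMeasure (m.restrict (support f)) := isFiniteMeasure_restrict.2 hS.ne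
  have hint := integrable_comp_mul (m := m.restrict (support f)) hf (.of_forall hf0) hF hFC hh
  have hrestrict : ∫ x in support f, F (h * f x) ∂m = ∫ x, F (h * f x) ∂m :=
    setIntegral_eq_integral_of_forall_compl_eq_zero fun x hx => by
      rw [notMem_support.1 hx, mul_zero, hF0]
  have hgap : 0 < ∫ x in support f, (c - F (h * f x)) ∂m := by
    have hlt : ∀ x, 0 < c - F (h * f x) := fun x => sub_pos.2 (hFlt _ (mul_nonneg hh (hf0 x)))
    rw [integral_pos_iff_support_of_nonneg (fun x => (hlt x).le) ((integrable_const c).sub hint),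
      (eq_univ_of_forall fun x => (hlt x).ne' : support _ = univ), Measure.restrict_apply_univ]
    exact pos_iff_ne_zero.2 hS0
  rw [integral_sub (integrable_const c) hint, setIntegral_const, hrestrict, smul_eq_mul,
    sub_pos, mul_comm] at hgap
  exact hgap

end IntegralCompMul

section Laplace

variable {Ω : Type*} [MeasurableSpace Ω]

/-- `G'(u)`: the mean of `ξ` under `P` tilted by `exp (-u ξ)`. -/
noncomputable def tiltedMean (ξ : Ω → ℝ) (P : Measure Ω) (u : ℝ) : ℝ :=
  (∫ ω, ξ ω * exp (-u * ξ ω) ∂P) / mgf ξ P (-u)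

variable {P : Measure Ω} {ξ : Ω → ℝ} {t u : ℝ}

lemma mul_integral_mul_exp_neg_mul (u : ℝ) :
    u * ∫ ω, ξ ω * exp (-u * ξ ω) ∂P = ∫ ω, u * ξ ω * exp (-(u * ξ ω)) ∂P := by
  rw [← integral_const_mul]
  simp only [neg_mul, mul_assoc]

variable [IsProbabilityMeasure P]

lemma mgf_le_one_of_nonpos (hξ : 0 ≤ᵐ[P] ξ) (ht : t ≤ 0) : mgf ξ P t ≤ 1 := by
  simpa using mgf_anti_of_nonpos hξ ht (by simp)

lemma measureReal_eq_zero_lt_mgf (hξm : Measurable ξ) (hp1 : P.real {ω | ξ ω = 0} < 1)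
    (hint : Integrable (fun ω => exp (t * ξ ω)) P) : P.real {ω | ξ ω = 0} < mgf ξ P t := by
  have hS : MeasurableSet {ω | ξ ω = 0} := hξm (measurableSet_singleton 0)
  have hzero : ∫ ω in {ω | ξ ω = 0}, exp (t * ξ ω) ∂P = P.real {ω | ξ ω = 0} := by
    rw [setIntegral_congr_fun hS (g := fun _ => 1) fun ω hω => by simp [hω.out],
      setIntegral_const, smul_eq_mul, mul_one]
  have hpos : 0 < ∫ ω in {ω | ξ ω = 0}ᶜ, exp (t * ξ ω) ∂P := by
    have : NeZero (P.restrict {ω | ξ ω = 0}ᶜ) := ⟨by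
      rw [ne_eq, Measure.restrict_eq_zero, ← measureReal_eq_zero_iff, probReal_compl_eq_one_sub hS]
      linarith⟩
    exact integral_exp_pos hint.restrict
  rw [mgf, ← integral_add_compl hS hint]
  linarith

lemma tendsto_mgf_neg_atTop (hξm : Measurable ξ) (hξ : 0 ≤ᵐ[P] ξ) :
    Tendsto (fun u => mgf ξ P (-u)) atTop (𝓝 (P.real {ω | ξ ω = 0})) := by
  have := tendsto_integral_comp_mul_atTop (F := fun x => exp (-x)) (C := 1) hξm hξ
    (by fun_prop) (fun u hu => by simpa using hu) tendsto_exp_neg_atTop_nhds_zero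
  simpa [mgf] using this

lemma neg_cgf_neg_lt (hξm : Measurable ξ) (hp0 : 0 < P.real {ω | ξ ω = 0})
    (hp1 : P.real {ω | ξ ω = 0} < 1) (hint : Integrable (fun ω => exp (-u * ξ ω)) P) :
    -cgf ξ P (-u) < -log (P.real {ω | ξ ω = 0}) :=
  neg_lt_neg (log_lt_log hp0 (measureReal_eq_zero_lt_mgf hξm hp1 hint))

lemma abs_neg_cgf_neg_le (hξm : Measurable ξ) (hξ : ∀ᵐ ω ∂P, ξ ω ∈ Icc 0 1)
    (hp0 : 0 < P.real {ω | ξ ω = 0}) (hp1 : P.real {ω | ξ ω = 0} < 1) (hu : 0 ≤ u) :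
    |-cgf ξ P (-u)| ≤ -log (P.real {ω | ξ ω = 0}) := by
  have hnonneg : 0 ≤ -cgf ξ P (-u) := neg_nonneg.2 <| log_nonpos mgf_nonneg <|
    mgf_le_one_of_nonpos (hξ.mono fun _ h => h.1) (neg_nonpos.2 hu)
  rw [abs_of_nonneg hnonneg]
  exact (neg_cgf_neg_lt hξm hp0 hp1 (integrable_exp_mul_of_mem_Icc hξm.aemeasurable hξ)).le

lemma tendsto_neg_cgf_neg_atTop (hξm : Measurable ξ) (hξ : 0 ≤ᵐ[P] ξ)
    (hp0 : 0 < P.real {ω | ξ ω = 0}) :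
    Tendsto (fun u => -cgf ξ P (-u)) atTop (𝓝 (-log (P.real {ω | ξ ω = 0}))) :=
  ((continuousAt_log hp0.ne').tendsto.comp (tendsto_mgf_neg_atTop hξm hξ)).neg

lemma measurable_neg_cgf_neg (hξm : Measurable ξ) (hξ : ∀ᵐ ω ∂P, ξ ω ∈ Icc 0 1) :
    Measurable fun u => -cgf ξ P (-u) :=
  ((continuous_mgf fun _ => integrable_exp_mul_of_mem_Icc hξm.aemeasurable hξ).measurable.comp
    measurable_neg).log.neg

lemma abs_mul_integral_mul_exp_neg_mul_le (hξ : 0 ≤ᵐ[P] ξ) (hu : 0 ≤ u) :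
    |u * ∫ ω, ξ ω * exp (-u * ξ ω) ∂P| ≤ exp (-1) := by
  rw [mul_integral_mul_exp_neg_mul]
  simpa using norm_integral_le_of_norm_le_const
    (ae_norm_comp_mul_le (F := fun x => x * exp (-x)) hξ (fun _ => abs_mul_exp_neg_le) hu)

lemma tendsto_mul_integral_mul_exp_neg_mul_atTop (hξm : Measurable ξ) (hξ : 0 ≤ᵐ[P] ξ) :
    Tendsto (fun u => u * ∫ ω, ξ ω * exp (-u * ξ ω) ∂P) atTop (𝓝 0) := by
  have := tendsto_integral_comp_mul_atTop (F := fun x => x * exp (-x)) hξm hξ (by fun_prop)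
    (fun _ => abs_mul_exp_neg_le) (by simpa using tendsto_pow_mul_exp_neg_atTop_nhds_zero 1)
  simp only [zero_mul, zero_add] at this
  simpa only [mul_integral_mul_exp_neg_mul] using this

lemma abs_mul_tiltedMean_le (hξm : Measurable ξ) (hξ : ∀ᵐ ω ∂P, ξ ω ∈ Icc 0 1)
    (hp0 : 0 < P.real {ω | ξ ω = 0}) (hp1 : P.real {ω | ξ ω = 0} < 1) (hu : 0 ≤ u) :
    |u * tiltedMean ξ P u| ≤ exp (-1) / P.real {ω | ξ ω = 0} := by
  have hmgf := measureReal_eq_zero_lt_mgf hξm hp1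
    (integrable_exp_mul_of_mem_Icc hξm.aemeasurable hξ (t := -u))
  rw [tiltedMean, mul_div_assoc', abs_div, abs_of_pos (hp0.trans hmgf)]
  exact div_le_div₀ (exp_pos _).le
    (abs_mul_integral_mul_exp_neg_mul_le (hξ.mono fun _ h => h.1) hu) hp0 hmgf.le

lemma tendsto_mul_tiltedMean_atTop (hξm : Measurable ξ) (hξ : 0 ≤ᵐ[P] ξ)
    (hp0 : 0 < P.real {ω | ξ ω = 0}) :
    Tendsto (fun u => u * tiltedMean ξ P u) atTop (𝓝 0) := by
  have := (tendsto_mul_integral_mul_exp_neg_mul_atTop hξm hξ).div (tendsto_mgf_neg_atTop hξm hξ)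
    hp0.ne'
  rw [zero_div] at this
  exact this.congr fun u => mul_div_assoc _ _ _

lemma measurable_tiltedMean (hξm : Measurable ξ) (hξ : ∀ᵐ ω ∂P, ξ ω ∈ Icc 0 1) :
    Measurable (tiltedMean ξ P) := by
  have hnum : Measurable fun u => ∫ ω, ξ ω * exp (-u * ξ ω) ∂P :=
    (StronglyMeasurable.integral_prod_right (f := fun u ω => ξ ω * exp (-u * ξ ω))
      (by fun_prop : Measurable _).stronglyMeasurable).measurable
  exact hnum.div ((continuous_mgf fun _ => integrable_exp_mul_of_mem_Icc hξm.aemeasurable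
    hξ).measurable.comp measurable_neg)

end Laplace

lemma support_sum_sq {X ι : Type*} [Fintype ι] (φ : X → ι → ℝ) :
    support (fun x => ∑ k, φ x k ^ 2) = {x | φ x ≠ 0} := by
  ext x
  simp [Finset.sum_eq_zero_iff_of_nonneg fun k _ => sq_nonneg (φ x k), funext_iff]

theorem Gamma_limits_at_top_general
    {Ω : Type*} [MeasurableSpace Ω] (P : Measure Ω) [IsProbabilityMeasure P]
    (ξ : Ω → ℝ) (hmeas : Measurable ξ)
    (hξ : ∀ᵐ ω ∂P, 0 ≤ ξ ω ∧ ξ ω ≤ 1)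
    (p : ℝ) (hp : p = (P {ω | ξ ω = 0}).toReal) (hp0 : 0 < p) (hp1 : p < 1)
    (ν : ℝ) (hν : ν = Real.log (1 / p))
    (G : ℝ → ℝ) (hG : ∀ u, G u = -Real.log (∫ ω, Real.exp (-u * ξ ω) ∂P))
    (G' : ℝ → ℝ)
    (hG' : ∀ u, G' u = (∫ ω, ξ ω * Real.exp (-u * ξ ω) ∂P) /
        (∫ ω, Real.exp (-u * ξ ω) ∂P))
    (d : ℕ)
    (φ : (Fin d → ℝ) → (Fin d → ℝ)) (hφmeas : Measurable φ)
    (hφpos : 0 < ∫ x, ∑ k, (φ x k) ^ 2)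
    (hsupp : volume {x | φ x ≠ 0} < ⊤)
    (Dinf : ℝ) (hDinf : Dinf = ν * (volume {x | φ x ≠ 0}).toReal)
    (Γ : ℝ → ℝ) (hΓ : ∀ h, Γ h = ∫ x, G (h * ∑ k, (φ x k) ^ 2))
    (Γ' : ℝ → ℝ)
    (hΓ' : ∀ h, Γ' h = ∫ x, (∑ k, (φ x k) ^ 2) * G' (h * ∑ k, (φ x k) ^ 2)) :
    (∀ h, 0 < h → Γ h < Dinf) ∧ Tendsto Γ atTop (𝓝 Dinf) ∧
      Tendsto (fun h => h * Γ' h) atTop (𝓝 0) := by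
  obtain rfl : G = fun u => -cgf ξ P (-u) := funext hG
  obtain rfl : G' = tiltedMean ξ P := funext hG'
  obtain rfl : Γ = fun h => ∫ x, -cgf ξ P (-(h * ∑ k, φ x k ^ 2)) := funext hΓ
  have hν' : ν = -log (P.real {ω | ξ ω = 0}) := by rw [hν, hp, one_div, log_inv]; rfl
  subst hp hν' hDinf
  set f : (Fin d → ℝ) → ℝ := fun x => ∑ k, φ x k ^ 2
  have hf : Measurable f := by fun_prop
  have hf0 : 0 ≤ f := fun x => by positivity
  rw [← support_sum_sq φ] at hsupp ⊢
  have hS0 : volume (support f) ≠ 0 := fun h0 => hφpos.ne' (integral_eq_zero_of_ae h0)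
  have hξ0 : 0 ≤ᵐ[P] ξ := hξ.mono fun _ h => h.1
  have hGm := measurable_neg_cgf_neg hmeas hξ
  have hGν := fun u : ℝ => abs_neg_cgf_neg_le (u := u) hmeas hξ hp0 hp1
  have hGlt := fun u : ℝ => neg_cgf_neg_lt (u := u) hmeas hp0 hp1
    (integrable_exp_mul_of_mem_Icc hmeas.aemeasurable hξ)
  refine ⟨fun h hh => ?_, ?_, ?_⟩
  · exact integral_comp_mul_lt_mul_measureReal_support hf hf0 hsupp hS0 hGm (by simp) hGν
      (fun u _ => hGlt u) hh.le
  · exact tendsto_integral_comp_mul_atTop_of_measure_support_lt_top hf hf0 hsupp hGm (by simp) hGν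
      (tendsto_neg_cgf_neg_atTop hmeas hξ0 hp0)
  · have hK := tendsto_integral_comp_mul_atTop_of_measure_support_lt_top
      (F := fun u => u * tiltedMean ξ P u) hf hf0 hsupp
      (measurable_id.mul (measurable_tiltedMean hmeas hξ)) (zero_mul _)
      (fun u => abs_mul_tiltedMean_le hmeas hξ hp0 hp1) (tendsto_mul_tiltedMean_atTop hmeas hξ0 hp0)
    rw [zero_mul] at hK
    refine hK.congr fun h => ?_
    rw [hΓ', ← integral_const_mul]
    simp only [mul_assoc]
    rfl

/-- If `|{φ ≠ 0}| < ∞` and `D_∞ = ν |{φ ≠ 0}|`, then `Γ(h; φ) < D_∞` for every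
`h > 0`, `Γ(h; φ) → D_∞` as `h → ∞`, and `h Γ'(h; φ) → 0` as `h → ∞`. -/
theorem Gamma_limits_at_top
    {Ω : Type*} [MeasurableSpace Ω] (P : Measure Ω) [IsProbabilityMeasure P]
    (ξ : Ω → ℝ) (hmeas : Measurable ξ)
    (hξ : ∀ᵐ ω ∂P, 0 ≤ ξ ω ∧ ξ ω ≤ 1)
    (p : ℝ) (hp : p = (P {ω | ξ ω = 0}).toReal) (hp0 : 0 < p) (hp1 : p < 1)
    (μ : ℝ) (hμ : μ = ∫ ω, ξ ω ∂P) (hμpos : 0 < μ)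
    (ν : ℝ) (hν : ν = Real.log (1 / p))
    (G : ℝ → ℝ) (hG : ∀ u, G u = -Real.log (∫ ω, Real.exp (-u * ξ ω) ∂P))
    (G' : ℝ → ℝ)
    (hG' : ∀ u, G' u = (∫ ω, ξ ω * Real.exp (-u * ξ ω) ∂P) /
        (∫ ω, Real.exp (-u * ξ ω) ∂P))
    (d : ℕ) (hd : 1 ≤ d)
    (φ : (Fin d → ℝ) → (Fin d → ℝ)) (hφmeas : Measurable φ)
    (hφint : Integrable (fun x => ∑ k, (φ x k) ^ 2))
    (hφpos : 0 < ∫ x, ∑ k, (φ x k) ^ 2)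
    (hsupp : volume {x | φ x ≠ 0} < ⊤)
    (Dinf : ℝ) (hDinf : Dinf = ν * (volume {x | φ x ≠ 0}).toReal)
    (Γ : ℝ → ℝ) (hΓ : ∀ h, Γ h = ∫ x, G (h * ∑ k, (φ x k) ^ 2))
    (Γ' : ℝ → ℝ)
    (hΓ' : ∀ h, Γ' h = ∫ x, (∑ k, (φ x k) ^ 2) * G' (h * ∑ k, (φ x k) ^ 2)) :
    (∀ h, 0 < h → Γ h < Dinf) ∧ Tendsto Γ atTop (𝓝 Dinf) ∧
      Tendsto (fun h => h * Γ' h) atTop (𝓝 0) :=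
  Gamma_limits_at_top_general P ξ hmeas hξ p hp hp0 hp1 ν hν G hG G' hG' d φ hφmeas hφpos hsupp Dinf
    hDinf Γ hΓ Γ' hΓ'
end

section
/- For every D with 0 < D < D_∞ there exists h > 0 such that Γ(h; φ) − h Γ′(h; φ) = D and 𝒢(φ; D) = h⁻¹ (Γ(h; φ) − D) = Γ′(h; φ) > 0, where Γ′(h; φ) = ∫_{ℝ^d} |φ(x)|² G′(h |φ(x)|²) dx with G′(u) = E[ξ exp(−u ξ)]/E[exp(−u ξ)]. -/
/-!
The exponent `G(u) = -log E[exp(-u ξ)]` is concave on `[0, ∞)` with slope `G'`, vanishes at `0`,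
increases to `ν = -log P(ξ = 0)`, and `u G'(u) → 0`. Hence `Γ(h)` is concave in `h` with slope
`Γ'(h)`, and the intercept at `0` of its tangent line, `Γ(h) - h Γ'(h) = ∫ (G - u G')(h |φ|²)`,
is continuous, vanishes at `h = 0` and tends to `D_∞` by dominated convergence. By the
intermediate value theorem some `h > 0` has intercept `D`. The graph of `Γ` lies below that
tangent line, so among the chords from `(0, D)` to the graph of `Γ` the one to `(h, Γ h)` has
the largest slope, namely `Γ'(h)`.
-/

open MeasureTheory ProbabilityTheory Real Filter Topology Set
open scoped ENNReal

lemma exists_pos_eq_of_continuousOn_Ici {F : ℝ → ℝ} {ℓ D : ℝ} (hF : ContinuousOn F (Ici 0))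
    (hF0 : F 0 = 0) (hlim : Tendsto F atTop (𝓝 ℓ)) (hD : 0 < D) (hDℓ : D < ℓ) :
    ∃ h > 0, F h = D := by
  obtain ⟨h, hh, hFh⟩ := isPreconnected_Ici.intermediate_value_Ico self_mem_Ici
    (le_principal_iff.2 (Ici_mem_atTop 0)) hF hlim ⟨by rw [hF0]; exact hD.le, hDℓ⟩
  refine ⟨h, lt_of_le_of_ne hh ?_, hFh⟩
  rintro rfl
  exact hD.ne' (hF0 ▸ hFh).symm

/-- The tangent line to `Γ` at `h` passes through `(0, D)`, so it dominates every chord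
issued from `(0, D)`. -/
lemma isGreatest_inv_mul_sub_of_tangent {Γ : ℝ → ℝ} {D h s : ℝ} (hh : 0 < h)
    (hD : Γ h - h * s = D) (htan : ∀ g > 0, Γ g ≤ Γ h + (g - h) * s) :
    IsGreatest {y | ∃ g > 0, y = g⁻¹ * (Γ g - D)} s := by
  refine ⟨⟨h, hh, ?_⟩, ?_⟩
  · rw [← hD, sub_sub_cancel, inv_mul_cancel_left₀ hh.ne']
  · rintro y ⟨g, hg, rfl⟩
    rw [inv_mul_le_iff₀ hg]
    linarith [htan g hg]

/-- The properties of the exponent `G u = -log E[exp (-u ξ)]` and of its derivative `G'` on which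
the variational problem rests (`G` is concave on `[0, ∞)` in the tangent-line form). -/
structure IsConcaveProfile (G G' : ℝ → ℝ) (ν : ℝ) : Prop where
  continuous : Continuous G
  continuous_slope : Continuous G'
  map_zero : G 0 = 0
  slope_pos : ∀ u, 0 < u → 0 < G' u
  le_add_mul_slope : ∀ u v, 0 ≤ u → 0 ≤ v → G v ≤ G u + (v - u) * G' u
  tendsto_atTop : Tendsto G atTop (𝓝 ν)
  tendsto_mul_slope_atTop : Tendsto (fun u => u * G' u) atTop (𝓝 0)

namespace IsConcaveProfile

variable {G G' : ℝ → ℝ} {ν : ℝ}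

lemma mul_slope_nonneg (hG : IsConcaveProfile G G' ν) {u : ℝ} (hu : 0 ≤ u) : 0 ≤ u * G' u := by
  rcases hu.eq_or_lt with rfl | hu
  · simp
  · exact mul_nonneg hu.le (hG.slope_pos u hu).le

lemma mul_slope_le (hG : IsConcaveProfile G G' ν) {u : ℝ} (hu : 0 ≤ u) : u * G' u ≤ G u := by
  have := hG.le_add_mul_slope u 0 hu le_rfl
  rw [hG.map_zero] at this
  linarith

lemma apply_le (hG : IsConcaveProfile G G' ν) {u : ℝ} (hu : 0 ≤ u) : G u ≤ ν := by
  refine ge_of_tendsto hG.tendsto_atTop ?_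
  filter_upwards [eventually_gt_atTop u] with v hv
  have := hG.le_add_mul_slope v u (hu.trans hv.le) hu
  nlinarith [hG.slope_pos v (hu.trans_lt hv)]

lemma abs_apply_le (hG : IsConcaveProfile G G' ν) {u : ℝ} (hu : 0 ≤ u) : |G u| ≤ ν := by
  rw [abs_of_nonneg ((hG.mul_slope_nonneg hu).trans (hG.mul_slope_le hu))]
  exact hG.apply_le hu

lemma abs_mul_slope_le (hG : IsConcaveProfile G G' ν) {u : ℝ} (hu : 0 ≤ u) : |u * G' u| ≤ ν := by
  rw [abs_of_nonneg (hG.mul_slope_nonneg hu)]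
  exact (hG.mul_slope_le hu).trans (hG.apply_le hu)

lemma abs_sub_mul_slope_le (hG : IsConcaveProfile G G' ν) {u : ℝ} (hu : 0 ≤ u) :
    |G u - u * G' u| ≤ ν := by
  rw [abs_of_nonneg (sub_nonneg.2 (hG.mul_slope_le hu))]
  linarith [hG.mul_slope_nonneg hu, hG.apply_le hu]

end IsConcaveProfile

namespace ProbabilityTheory

variable {Ω : Type*} [MeasurableSpace Ω] {P : Measure Ω} {X : Ω → ℝ}

/-- Jensen's inequality for `exp` under the law of `X` tilted by `exp (t * X)`. The ratio is the
tilted mean of `X`, i.e. the slope of `cgf X P` at `t`, so this is the tangent-line inequality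
for the convex function `cgf X P`. -/
lemma cgf_add_sub_mul_le_cgf [IsProbabilityMeasure P] {t s : ℝ}
    (ht : Integrable (fun ω => exp (t * X ω)) P)
    (hXt : Integrable (fun ω => X ω * exp (t * X ω)) P)
    (hs : Integrable (fun ω => exp (s * X ω)) P) :
    cgf X P t + (s - t) * (P[fun ω => X ω * exp (t * X ω)] / mgf X P t) ≤ cgf X P s := by
  set a := (s - t) * (P[fun ω => X ω * exp (t * X ω)] / mgf X P t)
  have hmgf : 0 < mgf X P t := mgf_pos ht
  have hpt : ∀ ω, exp a * ((1 - a) * exp (t * X ω) + (s - t) * (X ω * exp (t * X ω)))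
      ≤ exp (s * X ω) := fun ω => calc
    _ = exp (t * X ω) * (exp a * ((s - t) * X ω - a + 1)) := by ring
    _ ≤ exp (t * X ω) * (exp a * exp ((s - t) * X ω - a)) := by
      gcongr; exact add_one_le_exp _
    _ = exp (s * X ω) := by rw [← exp_add, ← exp_add]; ring_nf
  have hmean : (1 - a) * mgf X P t + (s - t) * P[fun ω => X ω * exp (t * X ω)] = mgf X P t := by
    simp only [a]; field_simp; ring
  have hint : exp a * mgf X P t ≤ mgf X P s := calc
    _ = exp a * ((1 - a) * mgf X P t + (s - t) * P[fun ω => X ω * exp (t * X ω)]) := by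
      rw [hmean]
    _ = ∫ ω, exp a * ((1 - a) * exp (t * X ω) + (s - t) * (X ω * exp (t * X ω))) ∂P := by
      rw [integral_const_mul, integral_add (ht.const_mul _) (hXt.const_mul _), integral_const_mul,
        integral_const_mul, mgf]
    _ ≤ mgf X P s := integral_mono (((ht.const_mul _).add (hXt.const_mul _)).const_mul _) hs hpt
  have := log_le_log (by positivity) hint
  rwa [log_mul (exp_pos a).ne' hmgf.ne', log_exp, ← cgf, ← cgf, add_comm] at this

lemma tendsto_mgf_atBot_of_nonneg [IsFiniteMeasure P] (hXm : Measurable X)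
    (hX : ∀ᵐ ω ∂P, 0 ≤ X ω) : Tendsto (mgf X P) atBot (𝓝 (P.real {ω | X ω = 0})) := by
  rw [← integral_indicator_one (measurableSet_eq_fun hXm measurable_const)]
  refine tendsto_integral_filter_of_dominated_convergence (fun _ => 1)
    (.of_forall fun t => (measurable_exp.comp (hXm.const_mul t)).aestronglyMeasurable) ?_
    (integrable_const 1) ?_
  · filter_upwards [eventually_le_atBot 0] with t ht
    filter_upwards [hX] with ω hω
    rw [norm_of_nonneg (exp_pos _).le, exp_le_one_iff]
    exact mul_nonpos_of_nonpos_of_nonneg ht hω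
  · filter_upwards [hX] with ω hω
    rcases hω.eq_or_lt with h0 | hpos
    · simp [← h0]
    · rw [indicator_of_notMem (show ω ∉ {x | X x = 0} from hpos.ne')]
      exact tendsto_exp_atBot.comp (tendsto_id.atBot_mul_const hpos)

lemma tendsto_mul_integral_mul_exp_atBot_of_nonneg [IsFiniteMeasure P] (hXm : Measurable X)
    (hX : ∀ᵐ ω ∂P, 0 ≤ X ω) :
    Tendsto (fun t => t * P[fun ω => X ω * exp (t * X ω)]) atBot (𝓝 0) := by
  have hmul_exp : Tendsto (fun s => s * exp s) atBot (𝓝 0) := by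
    have := (tendsto_pow_mul_exp_neg_atTop_nhds_zero 1).neg.comp tendsto_neg_atBot_atTop
    simpa [Function.comp_def] using this
  have key : Tendsto (fun t => ∫ ω, t * (X ω * exp (t * X ω)) ∂P) atBot
      (𝓝 (∫ _ : Ω, (0 : ℝ) ∂P)) := by
    refine tendsto_integral_filter_of_dominated_convergence (fun _ => exp (-1))
      (.of_forall fun t => (measurable_const.mul
        (hXm.mul (measurable_exp.comp (hXm.const_mul t)))).aestronglyMeasurable) ?_
      (integrable_const _) ?_
    · filter_upwards [eventually_le_atBot 0] with t ht
      filter_upwards [hX] with ω hω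
      have hneg : t * X ω ≤ 0 := mul_nonpos_of_nonpos_of_nonneg ht hω
      calc ‖t * (X ω * exp (t * X ω))‖ = -(t * X ω) * exp (-(-(t * X ω))) := by
            rw [neg_neg, norm_of_nonpos (by nlinarith [exp_pos (t * X ω)])]; ring
        _ ≤ exp (-1) := mul_exp_neg_le_exp_neg_one _
    · filter_upwards [hX] with ω hω
      rcases hω.eq_or_lt with h0 | hpos
      · simp [← h0]
      · refine (hmul_exp.comp (tendsto_id.atBot_mul_const hpos)).congr fun t => ?_
        simp only [Function.comp_apply, id]; ring
  simpa only [integral_const_mul, integral_zero] using key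

lemma continuous_integral_mul_exp (h : ∀ t, Integrable (fun ω => exp (t * X ω)) P) :
    Continuous fun t => P[fun ω => X ω * exp (t * X ω)] := by
  have hint : interior (integrableExpSet X P) = univ := by
    rw [show integrableExpSet X P = univ from eq_univ_of_forall h, interior_univ]
  have := (analyticOnNhd_mgf (X := X) (μ := P)).deriv.continuousOn
  rw [hint, continuousOn_univ] at this
  exact this.congr fun t => deriv_mgf (hint ▸ mem_univ t)

lemma integrable_mul_exp_of_mem_Icc [IsFiniteMeasure P] (hXm : Measurable X)
    (hX : ∀ᵐ ω ∂P, X ω ∈ Icc 0 1) (t : ℝ) : Integrable (fun ω => X ω * exp (t * X ω)) P :=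
  (integrable_exp_mul_of_mem_Icc hXm.aemeasurable hX).bdd_mul hXm.aestronglyMeasurable
    (hX.mono fun _ hω => (norm_of_nonneg hω.1).trans_le hω.2)

lemma integral_mul_exp_pos [IsProbabilityMeasure P] (hXm : Measurable X)
    (hX : ∀ᵐ ω ∂P, X ω ∈ Icc 0 1) (hmean : 0 < P[X]) {t : ℝ} (ht : t ≤ 0) :
    0 < P[fun ω => X ω * exp (t * X ω)] := by
  have hle : exp t * P[X] ≤ P[fun ω => X ω * exp (t * X ω)] := by
    rw [← integral_const_mul]
    refine integral_mono_ae ((Integrable.of_mem_Icc 0 1 hXm.aemeasurable hX).const_mul _)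
      (integrable_mul_exp_of_mem_Icc hXm hX t) ?_
    filter_upwards [hX] with ω hω
    have : exp t ≤ exp (t * X ω) := exp_le_exp.2 (by nlinarith [hω.1, hω.2])
    nlinarith [hω.1]
  exact (mul_pos (exp_pos t) hmean).trans_le hle

theorem isConcaveProfile_neg_cgf_neg [IsProbabilityMeasure P] (hXm : Measurable X)
    (hX : ∀ᵐ ω ∂P, X ω ∈ Icc 0 1) (hX0 : 0 < P.real {ω | X ω = 0}) (hmean : 0 < P[X]) :
    IsConcaveProfile (fun u => -cgf X P (-u))
      (fun u => P[fun ω => X ω * exp (-u * X ω)] / mgf X P (-u))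
      (-log (P.real {ω | X ω = 0})) := by
  have hI : ∀ t, Integrable (fun ω => exp (t * X ω)) P := fun _ =>
    integrable_exp_mul_of_mem_Icc hXm.aemeasurable hX
  have hmgf_cont : Continuous (mgf X P) := continuous_mgf hI
  have hnonneg : ∀ᵐ ω ∂P, 0 ≤ X ω := hX.mono fun _ hω => hω.1
  have hmgf_lim : Tendsto (fun u => mgf X P (-u)) atTop (𝓝 (P.real {ω | X ω = 0})) :=
    (tendsto_mgf_atBot_of_nonneg hXm hnonneg).comp tendsto_neg_atTop_atBot
  refine ⟨?_, ?_, by simp, fun u hu => ?_, fun u v _ _ => ?_, ?_, ?_⟩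
  · exact ((hmgf_cont.log fun t => (mgf_pos (hI t)).ne').comp continuous_neg).neg
  · exact ((continuous_integral_mul_exp hI).comp continuous_neg).div
      (hmgf_cont.comp continuous_neg) fun u => (mgf_pos (hI _)).ne'
  · exact div_pos (integral_mul_exp_pos hXm hX hmean (by linarith)) (mgf_pos (hI _))
  · have := cgf_add_sub_mul_le_cgf (hI (-u)) (integrable_mul_exp_of_mem_Icc hXm hX (-u)) (hI (-v))
    linarith
  · exact (hmgf_lim.log hX0.ne').neg
  · have := ((tendsto_mul_integral_mul_exp_atBot_of_nonneg hXm hnonneg).comp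
      tendsto_neg_atTop_atBot).neg.div hmgf_lim hX0.ne'
    rw [neg_zero, zero_div] at this
    refine this.congr fun u => ?_
    simp only [Pi.div_apply, Function.comp_apply, neg_mul, neg_neg, mul_div_assoc]

end ProbabilityTheory

section CompMul

variable {α : Type*} {ψ : α → ℝ} {g : ℝ → ℝ} {c : ℝ}

lemma abs_comp_mul_le_indicator (hg0 : g 0 = 0) (hg : ∀ u, 0 ≤ u → |g u| ≤ c) (hψ : 0 ≤ ψ)
    ⦃h : ℝ⦄ (hh : 0 ≤ h) (x : α) :
    |g (h * ψ x)| ≤ {x | ψ x ≠ 0}.indicator (fun _ => c) x := by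
  by_cases hx : ψ x = 0
  · simp [hx, hg0]
  · rw [indicator_of_mem hx]
    exact hg _ (mul_nonneg hh (hψ x))

variable [MeasurableSpace α] {m : Measure α}

lemma integrable_indicator_setOf_ne_zero (hψm : Measurable ψ) (hsupp : m {x | ψ x ≠ 0} < ∞) :
    Integrable ({x | ψ x ≠ 0}.indicator fun _ => c) m :=
  (integrable_indicator_iff (measurableSet_eq_fun hψm measurable_const).compl).2
    (integrableOn_const hsupp.ne)

lemma integrable_comp_mul_of_abs_le (hgc : Continuous g) (hg0 : g 0 = 0)
    (hg : ∀ u, 0 ≤ u → |g u| ≤ c) (hψm : Measurable ψ) (hψ : 0 ≤ ψ)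
    (hsupp : m {x | ψ x ≠ 0} < ∞) ⦃h : ℝ⦄ (hh : 0 ≤ h) :
    Integrable (fun x => g (h * ψ x)) m :=
  (integrable_indicator_setOf_ne_zero hψm hsupp).mono'
    (hgc.measurable.comp (hψm.const_mul h)).aestronglyMeasurable
    (.of_forall (abs_comp_mul_le_indicator hg0 hg hψ hh))

lemma continuousOn_integral_comp_mul (hgc : Continuous g) (hg0 : g 0 = 0)
    (hg : ∀ u, 0 ≤ u → |g u| ≤ c) (hψm : Measurable ψ) (hψ : 0 ≤ ψ)
    (hsupp : m {x | ψ x ≠ 0} < ∞) :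
    ContinuousOn (fun h => ∫ x, g (h * ψ x) ∂m) (Ici 0) :=
  continuousOn_of_dominated
    (fun h _ => (hgc.measurable.comp (hψm.const_mul h)).aestronglyMeasurable)
    (fun _ hh => .of_forall (abs_comp_mul_le_indicator hg0 hg hψ hh))
    (integrable_indicator_setOf_ne_zero hψm hsupp)
    (.of_forall fun _ => (hgc.comp (continuous_id.mul continuous_const)).continuousOn)

lemma tendsto_integral_comp_mul_atTop_s11 (hgc : Continuous g) (hg0 : g 0 = 0)
    (hg : ∀ u, 0 ≤ u → |g u| ≤ c) (hψm : Measurable ψ) (hψ : 0 ≤ ψ)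
    (hsupp : m {x | ψ x ≠ 0} < ∞) {ℓ : ℝ} (hlim : Tendsto g atTop (𝓝 ℓ)) :
    Tendsto (fun h => ∫ x, g (h * ψ x) ∂m) atTop (𝓝 (ℓ * m.real {x | ψ x ≠ 0})) := by
  have hs : MeasurableSet {x | ψ x ≠ 0} := (measurableSet_eq_fun hψm measurable_const).compl
  rw [mul_comm, ← smul_eq_mul, ← integral_indicator_const ℓ hs]
  refine tendsto_integral_filter_of_dominated_convergence ({x | ψ x ≠ 0}.indicator fun _ => c)
    (.of_forall fun h => (hgc.measurable.comp (hψm.const_mul h)).aestronglyMeasurable)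
    ?_ (integrable_indicator_setOf_ne_zero hψm hsupp) (.of_forall fun x => ?_)
  · filter_upwards [eventually_ge_atTop 0] with h hh
    exact .of_forall (abs_comp_mul_le_indicator hg0 hg hψ hh)
  · by_cases hx : ψ x = 0
    · simp [hx, hg0]
    · rw [indicator_of_mem hx]
      exact hlim.comp (tendsto_id.atTop_mul_const (lt_of_le_of_ne (hψ x) (Ne.symm hx)))

end CompMul

namespace IsConcaveProfile

variable {α : Type*} [MeasurableSpace α] {m : Measure α} {ψ : α → ℝ}
variable {G G' : ℝ → ℝ} {ν : ℝ}

lemma integrable_comp_mul (hG : IsConcaveProfile G G' ν) (hψm : Measurable ψ) (hψ : 0 ≤ ψ)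
    (hsupp : m {x | ψ x ≠ 0} < ∞) ⦃h : ℝ⦄ (hh : 0 ≤ h) :
    Integrable (fun x => G (h * ψ x)) m :=
  integrable_comp_mul_of_abs_le hG.continuous hG.map_zero (fun _ => hG.abs_apply_le) hψm hψ hsupp hh

lemma integrable_mul_slope_comp_mul (hG : IsConcaveProfile G G' ν) (hψm : Measurable ψ)
    (hψ : 0 ≤ ψ) (hsupp : m {x | ψ x ≠ 0} < ∞) ⦃h : ℝ⦄ (hh : 0 ≤ h) :
    Integrable (fun x => h * ψ x * G' (h * ψ x)) m :=
  integrable_comp_mul_of_abs_le (g := fun u => u * G' u) (continuous_id.mul hG.continuous_slope)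
    (by simp) (fun _ => hG.abs_mul_slope_le) hψm hψ hsupp hh

lemma integrable_mul_slope_comp_mul_of_pos (hG : IsConcaveProfile G G' ν) (hψm : Measurable ψ)
    (hψ : 0 ≤ ψ) (hsupp : m {x | ψ x ≠ 0} < ∞) {h : ℝ} (hh : 0 < h) :
    Integrable (fun x => ψ x * G' (h * ψ x)) m :=
  ((hG.integrable_mul_slope_comp_mul hψm hψ hsupp hh.le).const_mul h⁻¹).congr
    (.of_forall fun x => by field_simp)

lemma integral_comp_mul_le_add_mul (hG : IsConcaveProfile G G' ν) (hψm : Measurable ψ)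
    (hψ : 0 ≤ ψ) (hsupp : m {x | ψ x ≠ 0} < ∞) {g h : ℝ} (hg : 0 ≤ g) (hh : 0 < h) :
    ∫ x, G (g * ψ x) ∂m ≤ ∫ x, G (h * ψ x) ∂m + (g - h) * ∫ x, ψ x * G' (h * ψ x) ∂m := by
  have hGi := hG.integrable_comp_mul hψm hψ hsupp
  have hG'i := (hG.integrable_mul_slope_comp_mul_of_pos hψm hψ hsupp hh).const_mul (g - h)
  rw [← integral_const_mul, ← integral_add (hGi hh.le) hG'i]
  refine integral_mono (hGi hg) ((hGi hh.le).add hG'i) fun x => ?_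
  have := hG.le_add_mul_slope (h * ψ x) (g * ψ x) (mul_nonneg hh.le (hψ x)) (mul_nonneg hg (hψ x))
  simp only
  linarith

lemma integral_mul_slope_comp_mul_pos (hG : IsConcaveProfile G G' ν) (hψm : Measurable ψ)
    (hψ : 0 ≤ ψ) (hsupp : m {x | ψ x ≠ 0} < ∞) (hsupp_pos : 0 < m {x | ψ x ≠ 0}) {h : ℝ}
    (hh : 0 < h) : 0 < ∫ x, ψ x * G' (h * ψ x) ∂m := by
  have hpos : ∀ x, ψ x ≠ 0 → 0 < G' (h * ψ x) := fun x hx =>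
    hG.slope_pos _ (mul_pos hh (lt_of_le_of_ne (hψ x) (Ne.symm hx)))
  have hnonneg : ∀ x, 0 ≤ ψ x * G' (h * ψ x) := fun x => by
    by_cases hx : ψ x = 0
    · simp [hx]
    · exact mul_nonneg (hψ x) (hpos x hx).le
  rw [integral_pos_iff_support_of_nonneg hnonneg
    (hG.integrable_mul_slope_comp_mul_of_pos hψm hψ hsupp hh)]
  convert hsupp_pos using 2
  ext x
  simpa using fun hx => (hpos x hx).ne'

theorem exists_isGreatest_chord_slope (hG : IsConcaveProfile G G' ν) (hψm : Measurable ψ)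
    (hψ : 0 ≤ ψ) (hsupp : m {x | ψ x ≠ 0} < ∞) (Γ Γ' : ℝ → ℝ)
    (hΓ : ∀ h, Γ h = ∫ x, G (h * ψ x) ∂m) (hΓ' : ∀ h, Γ' h = ∫ x, ψ x * G' (h * ψ x) ∂m)
    {D : ℝ} (hD : 0 < D) (hDν : D < ν * m.real {x | ψ x ≠ 0}) :
    ∃ h > 0, Γ h - h * Γ' h = D ∧ IsGreatest {y | ∃ g > 0, y = g⁻¹ * (Γ g - D)} (Γ' h) ∧
      0 < Γ' h := by
  set K := fun u => G u - u * G' u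
  have hKc : Continuous K := hG.continuous.sub (continuous_id.mul hG.continuous_slope)
  have hK0 : K 0 = 0 := by simp [K, hG.map_zero]
  have hKlim : Tendsto K atTop (𝓝 ν) := by
    simpa using hG.tendsto_atTop.sub hG.tendsto_mul_slope_atTop
  have hF : ∀ h ∈ Ici 0, ∫ x, K (h * ψ x) ∂m = Γ h - h * Γ' h := by
    intro h hh
    rw [integral_sub (hG.integrable_comp_mul hψm hψ hsupp hh)
      (hG.integrable_mul_slope_comp_mul hψm hψ hsupp hh), hΓ, hΓ', ← integral_const_mul]
    simp only [mul_assoc]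
  obtain ⟨h, hh, hFh⟩ := exists_pos_eq_of_continuousOn_Ici
    ((continuousOn_integral_comp_mul hKc hK0 (fun _ => hG.abs_sub_mul_slope_le) hψm hψ
      hsupp).congr fun h hh => (hF h hh).symm)
    (by simp [hΓ, hG.map_zero])
    ((tendsto_integral_comp_mul_atTop_s11 hKc hK0 (fun _ => hG.abs_sub_mul_slope_le) hψm hψ hsupp
      hKlim).congr' (eventually_ge_atTop 0 |>.mono hF))
    hD hDν
  have hsupp_pos : 0 < m {x | ψ x ≠ 0} := by
    refine (ENNReal.toReal_pos_iff.1 (measureReal_nonneg.lt_of_ne fun h0 => ?_)).1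
    rw [← h0, mul_zero] at hDν
    exact hD.not_gt hDν
  refine ⟨h, hh, hFh, isGreatest_inv_mul_sub_of_tangent hh hFh fun g hg => ?_, ?_⟩
  · simpa only [hΓ, hΓ'] using hG.integral_comp_mul_le_add_mul hψm hψ hsupp hg.le hh
  · simpa only [hΓ'] using hG.integral_mul_slope_comp_mul_pos hψm hψ hsupp hsupp_pos hh

end IsConcaveProfile

theorem calG_attained_general
    {Ω : Type*} [MeasurableSpace Ω] (P : Measure Ω) [IsProbabilityMeasure P]
    (ξ : Ω → ℝ) (hmeas : Measurable ξ)
    (hξ : ∀ᵐ ω ∂P, 0 ≤ ξ ω ∧ ξ ω ≤ 1)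
    (p : ℝ) (hp : p = (P {ω | ξ ω = 0}).toReal) (hp0 : 0 < p)
    (μ : ℝ) (hμ : μ = ∫ ω, ξ ω ∂P) (hμpos : 0 < μ)
    (ν : ℝ) (hν : ν = Real.log (1 / p))
    (G : ℝ → ℝ) (hG : ∀ u, G u = -Real.log (∫ ω, Real.exp (-u * ξ ω) ∂P))
    (G' : ℝ → ℝ)
    (hG' : ∀ u, G' u = (∫ ω, ξ ω * Real.exp (-u * ξ ω) ∂P) /
        (∫ ω, Real.exp (-u * ξ ω) ∂P))
    (d : ℕ)
    (φ : (Fin d → ℝ) → (Fin d → ℝ)) (hφmeas : Measurable φ)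
    (hsupp : volume {x | φ x ≠ 0} < ⊤)
    (Dinf : ℝ) (hDinf : Dinf = ν * (volume {x | φ x ≠ 0}).toReal)
    (Γ : ℝ → ℝ) (hΓ : ∀ h, Γ h = ∫ x, G (h * ∑ k, (φ x k) ^ 2))
    (Γ' : ℝ → ℝ)
    (hΓ' : ∀ h, Γ' h = ∫ x, (∑ k, (φ x k) ^ 2) * G' (h * ∑ k, (φ x k) ^ 2))
    (𝒢 : ℝ → ℝ)
    (h𝒢 : ∀ D, 𝒢 D = sSup {y : ℝ | ∃ h > (0 : ℝ), y = h⁻¹ * (Γ h - D)}) :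
    ∀ D, 0 < D → D < Dinf → ∃ h > (0 : ℝ),
      Γ h - h * Γ' h = D ∧ 𝒢 D = h⁻¹ * (Γ h - D) ∧ 𝒢 D = Γ' h ∧ 0 < Γ' h := by
  intro D hD hDDinf
  subst hp hμ hν
  have hprofile : IsConcaveProfile G G' (log (1 / P.real {ω | ξ ω = 0})) := by
    obtain rfl : G = fun u => -cgf ξ P (-u) := funext hG
    obtain rfl : G' = fun u => P[fun ω => ξ ω * exp (-u * ξ ω)] / mgf ξ P (-u) := funext hG'
    rw [one_div, log_inv]
    exact isConcaveProfile_neg_cgf_neg hmeas hξ hp0 hμpos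
  have hsupp_eq : {x | φ x ≠ 0} = {x | ∑ k, φ x k ^ 2 ≠ 0} := by
    ext x
    simp [funext_iff, Finset.sum_eq_zero_iff_of_nonneg fun k _ => sq_nonneg (φ x k)]
  obtain ⟨h, hh, hFh, hmax, hpos⟩ := hprofile.exists_isGreatest_chord_slope
    (ψ := fun x => ∑ k, φ x k ^ 2) (by fun_prop) (fun x => by positivity) (hsupp_eq ▸ hsupp)
    Γ Γ' hΓ hΓ' hD (by rwa [hDinf, hsupp_eq] at hDDinf)
  have h𝒢h : 𝒢 D = Γ' h := (h𝒢 D).trans hmax.csSup_eq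
  refine ⟨h, hh, hFh, h𝒢h.trans ?_, h𝒢h, hpos⟩
  field_simp
  linarith

/-- For every `D` with `0 < D < D_∞` there exists `h > 0` such that
`Γ(h; φ) - h Γ'(h; φ) = D` and `𝒢(φ; D) = h⁻¹ (Γ(h; φ) - D) = Γ'(h; φ) > 0`. -/
theorem calG_attained
    {Ω : Type*} [MeasurableSpace Ω] (P : Measure Ω) [IsProbabilityMeasure P]
    (ξ : Ω → ℝ) (hmeas : Measurable ξ)
    (hξ : ∀ᵐ ω ∂P, 0 ≤ ξ ω ∧ ξ ω ≤ 1)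
    (p : ℝ) (hp : p = (P {ω | ξ ω = 0}).toReal) (hp0 : 0 < p) (hp1 : p < 1)
    (μ : ℝ) (hμ : μ = ∫ ω, ξ ω ∂P) (hμpos : 0 < μ)
    (ν : ℝ) (hν : ν = Real.log (1 / p))
    (G : ℝ → ℝ) (hG : ∀ u, G u = -Real.log (∫ ω, Real.exp (-u * ξ ω) ∂P))
    (G' : ℝ → ℝ)
    (hG' : ∀ u, G' u = (∫ ω, ξ ω * Real.exp (-u * ξ ω) ∂P) /
        (∫ ω, Real.exp (-u * ξ ω) ∂P))
    (d : ℕ) (hd : 1 ≤ d)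
    (φ : (Fin d → ℝ) → (Fin d → ℝ)) (hφmeas : Measurable φ)
    (hφint : Integrable (fun x => ∑ k, (φ x k) ^ 2))
    (hφpos : 0 < ∫ x, ∑ k, (φ x k) ^ 2)
    (hsupp : volume {x | φ x ≠ 0} < ⊤)
    (Dinf : ℝ) (hDinf : Dinf = ν * (volume {x | φ x ≠ 0}).toReal)
    (Γ : ℝ → ℝ) (hΓ : ∀ h, Γ h = ∫ x, G (h * ∑ k, (φ x k) ^ 2))
    (Γ' : ℝ → ℝ)
    (hΓ' : ∀ h, Γ' h = ∫ x, (∑ k, (φ x k) ^ 2) * G' (h * ∑ k, (φ x k) ^ 2))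
    (𝒢 : ℝ → ℝ)
    (h𝒢 : ∀ D, 𝒢 D = sSup {y : ℝ | ∃ h > (0 : ℝ), y = h⁻¹ * (Γ h - D)}) :
    ∀ D, 0 < D → D < Dinf → ∃ h > (0 : ℝ),
      Γ h - h * Γ' h = D ∧ 𝒢 D = h⁻¹ * (Γ h - D) ∧ 𝒢 D = Γ' h ∧ 0 < Γ' h :=
  calG_attained_general P ξ hmeas hξ p hp hp0 μ hμ hμpos ν hν G hG G' hG' d φ hφmeas hsupp Dinf
    hDinf Γ hΓ Γ' hΓ' 𝒢 h𝒢
end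

section
/- For every D with 0 < D ≤ D_∞ and arbitrary ε > 0 and δ > 0, there exists a finite h > 0 such that 0 ≤ 𝒢(φ; D) − h⁻¹ (Γ(h; φ) − D) ≤ δ and D − ε ≤ Γ(h; φ) − h Γ′(h; φ) ≤ D, where Γ′(h; φ) = ∫_{ℝ^d} |φ(x)|² G′(h |φ(x)|²) dx with G′(u) = E[ξ exp(−u ξ)]/E[exp(−u ξ)]. -/
open MeasureTheory ProbabilityTheory Real Filter Topology

/-!
For concave `Γ`, the slope `h⁻¹ (Γ h - D)` of the chord from `(0, D)` is largest where the
tangent to `Γ` passes through `(0, D)`, i.e. where `Γ h - h Γ' h = D`; at such a point `h` the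
statement holds with equalities. Here `G u = -cgf ξ (-u)` with `cgf` convex and `0 ≤ ξ ≤ 1`, so
`G' ∈ [0, 1]` is antitone and `Γ` is concave, nondecreasing, `Γ 0 = 0`, and by dominated
convergence `Γ h → D_∞` and `h Γ' h → 0`. Since `Γ h - h Γ' h` is continuous and vanishes at
`0`, it reaches `D` unless it stays below `D` on `(0, ∞)`; then `D = D_∞`, so `Γ ≤ D` and
`𝒢 D ≤ 0`, while `h⁻¹ (Γ h - D) ≥ -D / h` and `Γ h - h Γ' h → D` make any large `h` work.
-/

section Concave

variable {Γ Γ' : ℝ → ℝ}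

theorem le_add_mul_sub_of_hasDerivAt_of_antitone (hΓ : ∀ h, HasDerivAt Γ (Γ' h) h)
    (hΓ' : Antitone Γ') (x y : ℝ) : Γ y ≤ Γ x + Γ' x * (y - x) := by
  have hcont : Continuous Γ := continuous_iff_continuousAt.2 fun h => (hΓ h).continuousAt
  rcases lt_trichotomy x y with hxy | rfl | hyx
  · obtain ⟨c, hc, hslope⟩ := exists_hasDerivAt_eq_slope Γ Γ' hxy hcont.continuousOn
      fun h _ => hΓ h
    rw [eq_div_iff (sub_ne_zero.2 hxy.ne')] at hslope
    nlinarith [hΓ' hc.1.le]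
  · simp
  · obtain ⟨c, hc, hslope⟩ := exists_hasDerivAt_eq_slope Γ Γ' hyx hcont.continuousOn
      fun h _ => hΓ h
    rw [eq_div_iff (sub_ne_zero.2 hyx.ne')] at hslope
    nlinarith [hΓ' hc.2.le]

theorem tendsto_mul_atTop_nhds_zero_of_hasDerivAt_of_antitone (hΓ : ∀ h, HasDerivAt Γ (Γ' h) h)
    (hΓ' : Antitone Γ') (hΓ'0 : ∀ h, 0 ≤ Γ' h) {L : ℝ} (hL : Tendsto Γ atTop (𝓝 L)) :
    Tendsto (fun h => h * Γ' h) atTop (𝓝 0) := by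
  have hdiff : Tendsto (fun h => 2 * (Γ h - Γ (h / 2))) atTop (𝓝 0) := by
    simpa using ((hL.sub (hL.comp (tendsto_id.atTop_div_const two_pos))).const_mul 2)
  refine tendsto_of_tendsto_of_tendsto_of_le_of_le' tendsto_const_nhds hdiff ?_ ?_
  · filter_upwards [eventually_ge_atTop 0] with h hh using mul_nonneg hh (hΓ'0 h)
  · filter_upwards with h
    -- the tangent at `h` lies above `Γ` at `h / 2`
    nlinarith [le_add_mul_sub_of_hasDerivAt_of_antitone hΓ hΓ' h (h / 2)]

theorem isGreatest_inv_mul_sub_of_sub_mul_eq (hΓ : ∀ h, HasDerivAt Γ (Γ' h) h)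
    (hΓ' : Antitone Γ') {D h₀ : ℝ} (hh₀ : 0 < h₀) (hD : Γ h₀ - h₀ * Γ' h₀ = D) :
    IsGreatest {y | ∃ h > (0 : ℝ), y = h⁻¹ * (Γ h - D)} (h₀⁻¹ * (Γ h₀ - D)) := by
  have hval : h₀⁻¹ * (Γ h₀ - D) = Γ' h₀ := by
    rw [← hD]; field_simp; ring
  refine ⟨⟨h₀, hh₀, rfl⟩, ?_⟩
  rintro _ ⟨h, hh, rfl⟩
  rw [hval, inv_mul_le_iff₀ hh]
  nlinarith [le_add_mul_sub_of_hasDerivAt_of_antitone hΓ hΓ' h₀ h]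

theorem exists_sub_mul_eq_of_le_sub_mul (hΓ : ∀ h, HasDerivAt Γ (Γ' h) h)
    (hΓ'c : Continuous Γ') (hΓ0 : Γ 0 = 0) {D h₁ : ℝ} (hD : 0 < D) (hh₁ : 0 < h₁)
    (hDh₁ : D ≤ Γ h₁ - h₁ * Γ' h₁) : ∃ h₀ > 0, Γ h₀ - h₀ * Γ' h₀ = D := by
  have hcont : Continuous fun h => Γ h - h * Γ' h :=
    (continuous_iff_continuousAt.2 fun h => (hΓ h).continuousAt).sub
      (continuous_id.mul hΓ'c)
  obtain ⟨h₀, hh₀, hD₀⟩ := intermediate_value_Icc hh₁.le hcont.continuousOn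
    ⟨by simp [hΓ0, hD.le], hDh₁⟩
  refine ⟨h₀, lt_of_le_of_ne hh₀.1 ?_, hD₀⟩
  rintro rfl
  simp [hΓ0, hD.ne] at hD₀

theorem exists_approx_sSup_of_forall_sub_mul_lt (hΓ : ∀ h, HasDerivAt Γ (Γ' h) h)
    (hΓ' : Antitone Γ') (hΓ'0 : ∀ h, 0 ≤ Γ' h) (hΓ0 : Γ 0 = 0) {L : ℝ}
    (hL : Tendsto Γ atTop (𝓝 L)) {D ε δ : ℝ} (hDL : D ≤ L) (hε : 0 < ε) (hδ : 0 < δ)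
    (hlt : ∀ h > 0, Γ h - h * Γ' h < D) :
    ∃ h > (0 : ℝ),
      0 ≤ sSup {y | ∃ h > (0 : ℝ), y = h⁻¹ * (Γ h - D)} - h⁻¹ * (Γ h - D) ∧
      sSup {y | ∃ h > (0 : ℝ), y = h⁻¹ * (Γ h - D)} - h⁻¹ * (Γ h - D) ≤ δ ∧
      D - ε ≤ Γ h - h * Γ' h ∧ Γ h - h * Γ' h ≤ D := by
  have hmono : Monotone Γ := monotone_of_deriv_nonneg (fun h => (hΓ h).differentiableAt)
    fun h => (hΓ h).deriv ▸ hΓ'0 h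
  have hg : Tendsto (fun h => Γ h - h * Γ' h) atTop (𝓝 L) := by
    simpa using hL.sub (tendsto_mul_atTop_nhds_zero_of_hasDerivAt_of_antitone hΓ hΓ' hΓ'0 hL)
  have hLD : L = D := le_antisymm (le_of_tendsto hg
    (by filter_upwards [eventually_gt_atTop 0] with h hh using (hlt h hh).le)) hDL
  have hnonpos : ∀ h > (0 : ℝ), h⁻¹ * (Γ h - D) ≤ 0 := fun h hh =>
    mul_nonpos_of_nonneg_of_nonpos (inv_nonneg.2 hh.le)
      (by linarith [hmono.ge_of_tendsto hL h])
  obtain ⟨h, hgh, hh⟩ := ((hg.eventually (lt_mem_nhds (by linarith : D - ε < L))).and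
    (eventually_ge_atTop (max 1 (D / δ)))).exists
  have hpos : 0 < h := lt_of_lt_of_le one_pos ((le_max_left _ _).trans hh)
  have hlow : -δ ≤ h⁻¹ * (Γ h - D) := by
    have hΓh : 0 ≤ Γ h := hΓ0 ▸ hmono hpos.le
    have hDδ : D ≤ δ * h := (div_le_iff₀' hδ).1 ((le_max_right _ _).trans hh)
    rw [le_inv_mul_iff₀ hpos]
    nlinarith
  have hsup : h⁻¹ * (Γ h - D) ≤ sSup {y | ∃ h > (0 : ℝ), y = h⁻¹ * (Γ h - D)} :=
    le_csSup ⟨0, by rintro _ ⟨h, hh, rfl⟩; exact hnonpos h hh⟩ ⟨h, hpos, rfl⟩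
  have hsup0 : sSup {y | ∃ h > (0 : ℝ), y = h⁻¹ * (Γ h - D)} ≤ 0 :=
    csSup_le ⟨_, h, hpos, rfl⟩ (by rintro _ ⟨h, hh, rfl⟩; exact hnonpos h hh)
  exact ⟨h, hpos, by linarith, by linarith, hgh.le, (hlt h hpos).le⟩

theorem exists_approx_sSup_of_hasDerivAt_of_antitone (hΓ : ∀ h, HasDerivAt Γ (Γ' h) h)
    (hΓ' : Antitone Γ') (hΓ'c : Continuous Γ') (hΓ'0 : ∀ h, 0 ≤ Γ' h) (hΓ0 : Γ 0 = 0)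
    {L : ℝ} (hL : Tendsto Γ atTop (𝓝 L)) {D ε δ : ℝ} (hD : 0 < D) (hDL : D ≤ L)
    (hε : 0 < ε) (hδ : 0 < δ) :
    ∃ h > (0 : ℝ),
      0 ≤ sSup {y | ∃ h > (0 : ℝ), y = h⁻¹ * (Γ h - D)} - h⁻¹ * (Γ h - D) ∧
      sSup {y | ∃ h > (0 : ℝ), y = h⁻¹ * (Γ h - D)} - h⁻¹ * (Γ h - D) ≤ δ ∧
      D - ε ≤ Γ h - h * Γ' h ∧ Γ h - h * Γ' h ≤ D := by
  by_cases hlt : ∀ h > 0, Γ h - h * Γ' h < D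
  · exact exists_approx_sSup_of_forall_sub_mul_lt hΓ hΓ' hΓ'0 hΓ0 hL hDL hε hδ hlt
  push Not at hlt
  obtain ⟨h₁, hh₁, hDh₁⟩ := hlt
  obtain ⟨h₀, hh₀, hD₀⟩ := exists_sub_mul_eq_of_le_sub_mul hΓ hΓ'c hΓ0 hD hh₁ hDh₁
  rw [(isGreatest_inv_mul_sub_of_sub_mul_eq hΓ hΓ' hh₀ hD₀).csSup_eq]
  exact ⟨h₀, hh₀, by simp, by simp [hδ.le], by linarith, hD₀.le⟩

end Concave

section IntegralComp

variable {X : Type*} [MeasurableSpace X] {m : Measure X} {s : X → ℝ} {G G' : ℝ → ℝ}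

theorem abs_le_abs_of_hasDerivAt_of_abs_le_one (hG : ∀ u, HasDerivAt G (G' u) u)
    (hG'1 : ∀ u, |G' u| ≤ 1) (hG0 : G 0 = 0) (u : ℝ) : |G u| ≤ |u| := by
  simpa [hG0] using convex_univ.norm_image_sub_le_of_norm_hasDerivWithin_le
    (fun v _ => (hG v).hasDerivWithinAt) (fun v _ => hG'1 v) (Set.mem_univ 0) (Set.mem_univ u)

theorem integrable_comp_mul_s12 (hG : ∀ u, HasDerivAt G (G' u) u) (hG'1 : ∀ u, |G' u| ≤ 1)
    (hG0 : G 0 = 0) (hs : Integrable s m) (h : ℝ) : Integrable (fun x => G (h * s x)) m := by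
  have hGc : Continuous G := continuous_iff_continuousAt.2 fun u => (hG u).continuousAt
  refine (hs.norm.const_mul |h|).mono' (hGc.comp_aestronglyMeasurable
    (hs.aestronglyMeasurable.const_mul h)) (ae_of_all _ fun x => ?_)
  simpa [abs_mul] using abs_le_abs_of_hasDerivAt_of_abs_le_one hG hG'1 hG0 (h * s x)

theorem integrable_mul_comp_mul (hG'c : Continuous G') (hG'1 : ∀ u, |G' u| ≤ 1)
    (hs : Integrable s m) (h : ℝ) : Integrable (fun x => s x * G' (h * s x)) m :=
  hs.mul_bdd (hG'c.comp_aestronglyMeasurable (hs.aestronglyMeasurable.const_mul h))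
    (ae_of_all _ fun _ => hG'1 _)

theorem hasDerivAt_integral_comp_mul (hG : ∀ u, HasDerivAt G (G' u) u)
    (hG'c : Continuous G') (hG'1 : ∀ u, |G' u| ≤ 1) (hG0 : G 0 = 0) (hs : Integrable s m)
    (h : ℝ) :
    HasDerivAt (fun h => ∫ x, G (h * s x) ∂m) (∫ x, s x * G' (h * s x) ∂m) h := by
  refine (hasDerivAt_integral_of_dominated_loc_of_deriv_le (bound := fun x => ‖s x‖)
    (F' := fun t x => s x * G' (t * s x)) univ_mem
    (Eventually.of_forall fun h => (integrable_comp_mul_s12 hG hG'1 hG0 hs h).1)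
    (integrable_comp_mul_s12 hG hG'1 hG0 hs h) (integrable_mul_comp_mul hG'c hG'1 hs h).1
    (ae_of_all _ fun x t _ => ?_) hs.norm (ae_of_all _ fun x t _ => ?_)).2
  · simpa [abs_mul] using mul_le_of_le_one_right (abs_nonneg (s x)) (hG'1 (t * s x))
  · exact ((hG (t * s x)).comp t (hasDerivAt_mul_const (s x))).congr_deriv (mul_comm _ _)

theorem continuous_integral_mul_comp_mul (hG'c : Continuous G') (hG'1 : ∀ u, |G' u| ≤ 1)
    (hs : Integrable s m) : Continuous fun h => ∫ x, s x * G' (h * s x) ∂m :=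
  continuous_of_dominated (fun h => (integrable_mul_comp_mul hG'c hG'1 hs h).1)
    (fun h => ae_of_all _ fun x => by
      simpa [abs_mul] using mul_le_of_le_one_right (abs_nonneg (s x)) (hG'1 (h * s x)))
    hs.norm (ae_of_all _ fun x => continuous_const.mul (hG'c.comp (by fun_prop)))

theorem antitone_integral_mul_comp_mul (hG' : Antitone G') (hG'c : Continuous G')
    (hG'1 : ∀ u, |G' u| ≤ 1) (hs : Integrable s m) (hs0 : ∀ x, 0 ≤ s x) :
    Antitone fun h => ∫ x, s x * G' (h * s x) ∂m := fun a b hab =>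
  integral_mono (integrable_mul_comp_mul hG'c hG'1 hs b) (integrable_mul_comp_mul hG'c hG'1 hs a)
    fun x => mul_le_mul_of_nonneg_left (hG' (mul_le_mul_of_nonneg_right hab (hs0 x))) (hs0 x)

theorem tendsto_integral_comp_mul_atTop_s12 (hG : ∀ u, HasDerivAt G (G' u) u)
    (hG'0 : ∀ u, 0 ≤ G' u) (hG0 : G 0 = 0) {ν : ℝ} (hGν : Tendsto G atTop (𝓝 ν))
    (hsm : Measurable s) (hs0 : ∀ x, 0 ≤ s x) (hfin : m {x | s x ≠ 0} < ⊤) :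
    Tendsto (fun h => ∫ x, G (h * s x) ∂m) atTop (𝓝 (ν * m.real {x | s x ≠ 0})) := by
  have hGm : Monotone G := monotone_of_deriv_nonneg (fun u => (hG u).differentiableAt)
    fun u => (hG u).deriv ▸ hG'0 u
  have hGc : Continuous G := continuous_iff_continuousAt.2 fun u => (hG u).continuousAt
  have hsupp : MeasurableSet {x | s x ≠ 0} := (measurableSet_singleton 0).preimage hsm |>.compl
  rw [mul_comm, ← smul_eq_mul, ← integral_indicator_const ν hsupp]
  refine tendsto_integral_filter_of_dominated_convergence _
    (Eventually.of_forall fun h => (hGc.measurable.comp (hsm.const_mul h)).aestronglyMeasurable)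
    ?_ ((integrable_indicator_iff hsupp).2 (integrableOn_const hfin.ne)) (ae_of_all _ fun x => ?_)
  · filter_upwards [eventually_ge_atTop 0] with h hh
    refine ae_of_all _ fun x => ?_
    by_cases hx : s x = 0
    · simp [hx, hG0]
    · have hGx : 0 ≤ G (h * s x) := hG0 ▸ hGm (mul_nonneg hh (hs0 x))
      simpa [hx, abs_of_nonneg hGx] using hGm.ge_of_tendsto hGν (h * s x)
  · by_cases hx : s x = 0
    · simp [hx, hG0]
    · rw [Set.indicator_of_mem (show x ∈ {x | s x ≠ 0} from hx)]
      exact hGν.comp (tendsto_id.atTop_mul_const ((hs0 x).lt_of_ne' hx))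

theorem exists_approx_sSup_integral_comp_mul (hG : ∀ u, HasDerivAt G (G' u) u)
    (hG' : Antitone G') (hG'c : Continuous G') (hG'0 : ∀ u, 0 ≤ G' u) (hG'1 : ∀ u, G' u ≤ 1)
    (hG0 : G 0 = 0) {ν : ℝ} (hGν : Tendsto G atTop (𝓝 ν)) (hsm : Measurable s)
    (hs : Integrable s m) (hs0 : ∀ x, 0 ≤ s x) (hfin : m {x | s x ≠ 0} < ⊤) {D ε δ : ℝ}
    (hD : 0 < D) (hDν : D ≤ ν * m.real {x | s x ≠ 0}) (hε : 0 < ε) (hδ : 0 < δ) :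
    ∃ h > (0 : ℝ),
      0 ≤ sSup {y | ∃ h > (0 : ℝ), y = h⁻¹ * (∫ x, G (h * s x) ∂m - D)} -
        h⁻¹ * (∫ x, G (h * s x) ∂m - D) ∧
      sSup {y | ∃ h > (0 : ℝ), y = h⁻¹ * (∫ x, G (h * s x) ∂m - D)} -
        h⁻¹ * (∫ x, G (h * s x) ∂m - D) ≤ δ ∧
      D - ε ≤ ∫ x, G (h * s x) ∂m - h * ∫ x, s x * G' (h * s x) ∂m ∧
      ∫ x, G (h * s x) ∂m - h * ∫ x, s x * G' (h * s x) ∂m ≤ D := by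
  have hG'abs : ∀ u, |G' u| ≤ 1 := fun u => abs_le.2 ⟨by linarith [hG'0 u], hG'1 u⟩
  exact exists_approx_sSup_of_hasDerivAt_of_antitone
    (hasDerivAt_integral_comp_mul hG hG'c hG'abs hG0 hs)
    (antitone_integral_mul_comp_mul hG' hG'c hG'abs hs hs0)
    (continuous_integral_mul_comp_mul hG'c hG'abs hs)
    (fun h => integral_nonneg fun x => mul_nonneg (hs0 x) (hG'0 _)) (by simp [hG0])
    (tendsto_integral_comp_mul_atTop_s12 hG hG'0 hG0 hGν hsm hs0 hfin) hD hDν hε hδ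

end IntegralComp

section CumulantGenerating

variable {Ω : Type*} [MeasurableSpace Ω] {P : Measure Ω} {ξ : Ω → ℝ}

theorem integrable_exp_mul_of_ae_mem_Icc [IsFiniteMeasure P] (hξm : AEMeasurable ξ P)
    (hξ : ∀ᵐ ω ∂P, 0 ≤ ξ ω ∧ ξ ω ≤ 1) (t : ℝ) : Integrable (fun ω => exp (t * ξ ω)) P := by
  refine .of_bound (measurable_exp.comp_aemeasurable (hξm.const_mul t)).aestronglyMeasurable
    (exp |t|) ?_
  filter_upwards [hξ] with ω hω
  rw [norm_of_nonneg (exp_pos _).le, exp_le_exp]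
  calc t * ξ ω ≤ |t * ξ ω| := le_abs_self _
    _ = |t| * ξ ω := by rw [abs_mul, abs_of_nonneg hω.1]
    _ ≤ |t| := mul_le_of_le_one_right (abs_nonneg t) hω.2

theorem mem_interior_integrableExpSet (hint : ∀ t, Integrable (fun ω => exp (t * ξ ω)) P)
    (t : ℝ) : t ∈ interior (integrableExpSet ξ P) := by
  rw [show integrableExpSet ξ P = Set.univ from Set.eq_univ_of_forall hint, interior_univ]
  trivial

theorem contDiff_cgf (hint : ∀ t, Integrable (fun ω => exp (t * ξ ω)) P) {n : WithTop ℕ∞} :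
    ContDiff ℝ n (cgf ξ P) :=
  AnalyticOnNhd.contDiff fun t _ => analyticAt_cgf (mem_interior_integrableExpSet hint t)

theorem monotone_deriv_cgf (hint : ∀ t, Integrable (fun ω => exp (t * ξ ω)) P) :
    Monotone (deriv (cgf ξ P)) := by
  refine monotone_of_deriv_nonneg (contDiff_cgf hint).differentiable_deriv_two fun t => ?_
  have ht := mem_interior_integrableExpSet hint t
  rw [← iteratedDeriv_one (f := cgf ξ P), ← iteratedDeriv_succ,
    iteratedDeriv_two_cgf_eq_integral ht]
  exact div_nonneg (integral_nonneg fun ω => by positivity) mgf_nonneg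

theorem deriv_cgf_nonneg (hint : ∀ t, Integrable (fun ω => exp (t * ξ ω)) P)
    (hξ : ∀ᵐ ω ∂P, 0 ≤ ξ ω) (t : ℝ) : 0 ≤ deriv (cgf ξ P) t := by
  rw [deriv_cgf (mem_interior_integrableExpSet hint t)]
  refine div_nonneg (integral_nonneg_of_ae ?_) mgf_nonneg
  filter_upwards [hξ] with ω hω using mul_nonneg hω (exp_pos _).le

theorem deriv_cgf_le_one [IsProbabilityMeasure P]
    (hint : ∀ t, Integrable (fun ω => exp (t * ξ ω)) P) (hξ : ∀ᵐ ω ∂P, ξ ω ≤ 1) (t : ℝ) :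
    deriv (cgf ξ P) t ≤ 1 := by
  have ht := mem_interior_integrableExpSet hint t
  rw [deriv_cgf ht, div_le_one (mgf_pos (hint t))]
  have hξexp : Integrable (fun ω => ξ ω * exp (t * ξ ω)) P := by
    simpa using integrable_pow_mul_exp_of_mem_interior_integrableExpSet ht 1
  refine integral_mono_ae hξexp (hint t) ?_
  filter_upwards [hξ] with ω hω using mul_le_of_le_one_left (exp_pos _).le hω

theorem tendsto_mgf_atBot [IsFiniteMeasure P] (hξm : Measurable ξ) (hξ : ∀ᵐ ω ∂P, 0 ≤ ξ ω) :
    Tendsto (mgf ξ P) atBot (𝓝 (P.real {ω | ξ ω = 0})) := by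
  have hzero : MeasurableSet {ω | ξ ω = 0} := hξm (measurableSet_singleton 0)
  rw [← mul_one (P.real _), ← smul_eq_mul, ← integral_indicator_const 1 hzero]
  refine tendsto_integral_filter_of_dominated_convergence (fun _ => 1)
    (Eventually.of_forall fun t => (measurable_exp.comp (hξm.const_mul t)).aestronglyMeasurable)
    ?_ (integrable_const 1) ?_
  · filter_upwards [eventually_le_atBot 0] with t ht
    filter_upwards [hξ] with ω hω
    rw [norm_of_nonneg (exp_pos _).le, exp_le_one_iff]
    exact mul_nonpos_of_nonpos_of_nonneg ht hω
  · filter_upwards [hξ] with ω hω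
    by_cases h0 : ξ ω = 0
    · simp [h0]
    · rw [Set.indicator_of_notMem (show ω ∉ {ω | ξ ω = 0} from h0)]
      exact tendsto_exp_atBot.comp (tendsto_id.atBot_mul_const (hω.lt_of_ne' h0))

theorem hasDerivAt_neg_cgf_neg (hint : ∀ t, Integrable (fun ω => exp (t * ξ ω)) P) (u : ℝ) :
    HasDerivAt (fun u => -cgf ξ P (-u)) (deriv (cgf ξ P) (-u)) u := by
  have hd := ((contDiff_cgf hint (n := 1)).differentiable one_ne_zero (-u)).hasDerivAt
  exact (hd.comp u (hasDerivAt_neg u)).neg.congr_deriv (by ring)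

end CumulantGenerating

theorem calG_approx_attained_general
    {Ω : Type*} [MeasurableSpace Ω] (P : Measure Ω) [IsProbabilityMeasure P]
    (ξ : Ω → ℝ) (hmeas : Measurable ξ)
    (hξ : ∀ᵐ ω ∂P, 0 ≤ ξ ω ∧ ξ ω ≤ 1)
    (p : ℝ) (hp : p = (P {ω | ξ ω = 0}).toReal) (hp0 : 0 < p)
    (ν : ℝ) (hν : ν = Real.log (1 / p))
    (G : ℝ → ℝ) (hG : ∀ u, G u = -Real.log (∫ ω, Real.exp (-u * ξ ω) ∂P))
    (G' : ℝ → ℝ)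
    (hG' : ∀ u, G' u = (∫ ω, ξ ω * Real.exp (-u * ξ ω) ∂P) /
        (∫ ω, Real.exp (-u * ξ ω) ∂P))
    (d : ℕ)
    (φ : (Fin d → ℝ) → (Fin d → ℝ)) (hφmeas : Measurable φ)
    (hφint : Integrable (fun x => ∑ k, (φ x k) ^ 2))
    (hsupp : volume {x | φ x ≠ 0} < ⊤)
    (Dinf : ℝ) (hDinf : Dinf = ν * (volume {x | φ x ≠ 0}).toReal)
    (Γ : ℝ → ℝ) (hΓ : ∀ h, Γ h = ∫ x, G (h * ∑ k, (φ x k) ^ 2))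
    (Γ' : ℝ → ℝ)
    (hΓ' : ∀ h, Γ' h = ∫ x, (∑ k, (φ x k) ^ 2) * G' (h * ∑ k, (φ x k) ^ 2))
    (𝒢 : ℝ → ℝ)
    (h𝒢 : ∀ D, 𝒢 D = sSup {y : ℝ | ∃ h > (0 : ℝ), y = h⁻¹ * (Γ h - D)}) :
    ∀ D, 0 < D → D ≤ Dinf → ∀ ε > (0 : ℝ), ∀ δ > (0 : ℝ), ∃ h > (0 : ℝ),
      0 ≤ 𝒢 D - h⁻¹ * (Γ h - D) ∧ 𝒢 D - h⁻¹ * (Γ h - D) ≤ δ ∧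
      D - ε ≤ Γ h - h * Γ' h ∧ Γ h - h * Γ' h ≤ D := by
  intro D hD hDle ε hε δ hδ
  have hint := integrable_exp_mul_of_ae_mem_Icc hmeas.aemeasurable hξ
  obtain rfl : G = fun u => -cgf ξ P (-u) := funext hG
  obtain rfl : G' = fun u => deriv (cgf ξ P) (-u) := funext fun u => by
    rw [hG', deriv_cgf (mem_interior_integrableExpSet hint (-u))]; rfl
  have hGν : Tendsto (fun u => -cgf ξ P (-u)) atTop (𝓝 ν) := by
    have hpP : P.real {ω | ξ ω = 0} = p := by rw [hp, measureReal_def]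
    rw [hν, one_div, log_inv, ← hpP]
    exact ((continuousAt_log (hpP ▸ hp0.ne')).tendsto.comp
      ((tendsto_mgf_atBot hmeas (hξ.mono fun _ h => h.1)).comp tendsto_neg_atTop_atBot)).neg
  have hsupp_eq : {x | ∑ k, (φ x k) ^ 2 ≠ 0} = {x | φ x ≠ 0} := Set.ext fun x => by
    simp [Finset.sum_eq_zero_iff_of_nonneg fun k _ => sq_nonneg (φ x k), funext_iff]
  obtain rfl : Γ = fun h => ∫ x, -cgf ξ P (-(h * ∑ k, (φ x k) ^ 2)) := funext hΓ
  obtain rfl : Γ' = fun h =>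
      ∫ x, (∑ k, (φ x k) ^ 2) * deriv (cgf ξ P) (-(h * ∑ k, (φ x k) ^ 2)) := funext hΓ'
  rw [h𝒢]
  refine exists_approx_sSup_integral_comp_mul (hasDerivAt_neg_cgf_neg hint)
    ((monotone_deriv_cgf hint).comp_antitone fun _ _ => neg_le_neg)
    (((contDiff_cgf hint).continuous_deriv le_rfl).comp continuous_neg)
    (fun u => deriv_cgf_nonneg hint (hξ.mono fun _ h => h.1) (-u))
    (fun u => deriv_cgf_le_one hint (hξ.mono fun _ h => h.2) (-u)) (by simp) hGν
    (by fun_prop) hφint (fun x => Finset.sum_nonneg fun k _ => sq_nonneg _)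
    (hsupp_eq ▸ hsupp) hD ?_ hε hδ
  rwa [hsupp_eq, measureReal_def, ← hDinf]

/-- For every `D` with `0 < D ≤ D_∞` and arbitrary `ε, δ > 0` there exists a
finite `h > 0` such that `0 ≤ 𝒢(φ; D) - h⁻¹ (Γ(h; φ) - D) ≤ δ` and
`D - ε ≤ Γ(h; φ) - h Γ'(h; φ) ≤ D`. -/
theorem calG_approx_attained
    {Ω : Type*} [MeasurableSpace Ω] (P : Measure Ω) [IsProbabilityMeasure P]
    (ξ : Ω → ℝ) (hmeas : Measurable ξ)
    (hξ : ∀ᵐ ω ∂P, 0 ≤ ξ ω ∧ ξ ω ≤ 1)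
    (p : ℝ) (hp : p = (P {ω | ξ ω = 0}).toReal) (hp0 : 0 < p) (hp1 : p < 1)
    (μ : ℝ) (hμ : μ = ∫ ω, ξ ω ∂P) (hμpos : 0 < μ)
    (ν : ℝ) (hν : ν = Real.log (1 / p))
    (G : ℝ → ℝ) (hG : ∀ u, G u = -Real.log (∫ ω, Real.exp (-u * ξ ω) ∂P))
    (G' : ℝ → ℝ)
    (hG' : ∀ u, G' u = (∫ ω, ξ ω * Real.exp (-u * ξ ω) ∂P) /
        (∫ ω, Real.exp (-u * ξ ω) ∂P))
    (d : ℕ) (hd : 1 ≤ d)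
    (φ : (Fin d → ℝ) → (Fin d → ℝ)) (hφmeas : Measurable φ)
    (hφint : Integrable (fun x => ∑ k, (φ x k) ^ 2))
    (hφpos : 0 < ∫ x, ∑ k, (φ x k) ^ 2)
    (hsupp : volume {x | φ x ≠ 0} < ⊤)
    (Dinf : ℝ) (hDinf : Dinf = ν * (volume {x | φ x ≠ 0}).toReal)
    (Γ : ℝ → ℝ) (hΓ : ∀ h, Γ h = ∫ x, G (h * ∑ k, (φ x k) ^ 2))
    (Γ' : ℝ → ℝ)
    (hΓ' : ∀ h, Γ' h = ∫ x, (∑ k, (φ x k) ^ 2) * G' (h * ∑ k, (φ x k) ^ 2))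
    (𝒢 : ℝ → ℝ)
    (h𝒢 : ∀ D, 𝒢 D = sSup {y : ℝ | ∃ h > (0 : ℝ), y = h⁻¹ * (Γ h - D)}) :
    ∀ D, 0 < D → D ≤ Dinf → ∀ ε > (0 : ℝ), ∀ δ > (0 : ℝ), ∃ h > (0 : ℝ),
      0 ≤ 𝒢 D - h⁻¹ * (Γ h - D) ∧ 𝒢 D - h⁻¹ * (Γ h - D) ≤ δ ∧
      D - ε ≤ Γ h - h * Γ' h ∧ Γ h - h * Γ' h ≤ D :=
  calG_approx_attained_general P ξ hmeas hξ p hp hp0 ν hν G hG G' hG' d φ hφmeas hφint hsupp Dinf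
    hDinf Γ hΓ Γ' hΓ' 𝒢 h𝒢
end
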